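/- arXiv:1909.06241 — 2 statements merged into one kernel-verified Lean document; each statement's English description precedes it below -/
import Mathlib

section
/- ∫_0^∞ ∫_s^∞ e^{-3s} e^{-(t-s)} (2(1−e^{-θ_ℓ s})(r + e^{-θ_ℓ t}(q−r)) − (1−e^{-θ_ℓ s})² r − 2(1−e^{-θ_h s})(r + e^{-θ_h t}(p−r)) + (1−e^{-θ_h s})² r) dt ds = 2θ_ℓ(q−r)/((1+θ_ℓ)(3+θ_ℓ)(3+2θ_ℓ)) − 2θ_h(p−r)/((1+θ_h)(3+θ_h)(3+2θ_h)) + r/(3+2θ_h) − r/(3+2θ_ℓ). -/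
/-!
Substituting `t = s + u`, the integrand becomes, for fixed `s`, a linear combination of
`e^{-u}`, `e^{-(1+θ_ℓ)u}` and `e^{-(1+θ_h)u}`, so the inner integral is a linear combination of
`e^{-(3+θ)s}` and `e^{-(3+2θ)s}` for `θ ∈ {θ_ℓ, θ_h}`; integrating once more gives the closed form.
-/

open MeasureTheory Real Set

theorem setIntegral_Ioi_eq_setIntegral_Ioi_zero_add {E : Type*} [NormedAddCommGroup E]
    [NormedSpace ℝ E] (f : ℝ → E) (c : ℝ) :
    ∫ x in Ioi c, f x = ∫ x in Ioi 0, f (x + c) := by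
  rw [← (measurePreserving_add_right volume c).setIntegral_preimage_emb
    (measurableEmbedding_addRight c) f (Ioi c)]
  congr 2
  ext x
  simp

theorem integral_sum_mul_exp_neg_mul_Ioi_zero {ι : Type*} (s : Finset ι) (k b : ι → ℝ)
    (hb : ∀ i ∈ s, 0 < b i) :
    ∫ x in Ioi 0, ∑ i ∈ s, k i * exp (-(b i * x)) = ∑ i ∈ s, k i / b i := by
  have hneg : ∀ i ∈ s, -b i < 0 := fun i hi => neg_neg_of_pos (hb i hi)
  simp_rw [← neg_mul]
  rw [integral_finsetSum s fun i hi => (integrableOn_exp_mul_Ioi (hneg i hi) 0).const_mul (k i)]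
  refine Finset.sum_congr rfl fun i hi => ?_
  rw [integral_const_mul, integral_exp_mul_Ioi (hneg i hi), mul_zero, exp_zero, neg_div_neg_eq,
    mul_one_div]

theorem integral_Ioi_inner_eq_sum_exp {p q r θh θl : ℝ} (hθh : 0 ≤ θh) (hθl : 0 ≤ θl) (s : ℝ) :
    (∫ t in Ioi s,
        exp (-3 * s) * exp (-(t - s)) *
          (2 * (1 - exp (-θl * s)) * (r + exp (-θl * t) * (q - r))
            - (1 - exp (-θl * s)) ^ 2 * r
            - 2 * (1 - exp (-θh * s)) * (r + exp (-θh * t) * (p - r))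
            + (1 - exp (-θh * s)) ^ 2 * r))
      -- rates written as `3 + θ + θ` so that `add_mul` and `exp_add` split `e^{-(3+2θ)s}`
      = ∑ i : Fin 4,
          ![2 * (q - r) / (1 + θl), -r - 2 * (q - r) / (1 + θl),
            -(2 * (p - r) / (1 + θh)), r + 2 * (p - r) / (1 + θh)] i *
          exp (-(![3 + θl, 3 + θl + θl, 3 + θh, 3 + θh + θh] i * s)) := by
  rw [setIntegral_Ioi_eq_setIntegral_Ioi_zero_add]
  have hsum := integral_sum_mul_exp_neg_mul_Ioi_zero Finset.univ
    ![exp (-(3 * s)) * r * (exp (-(θh * s)) ^ 2 - exp (-(θl * s)) ^ 2),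
      exp (-(3 * s)) * 2 * (q - r) * exp (-(θl * s)) * (1 - exp (-(θl * s))),
      -(exp (-(3 * s)) * 2 * (p - r) * exp (-(θh * s)) * (1 - exp (-(θh * s))))]
    ![1, 1 + θl, 1 + θh] fun i _ => by
      fin_cases i <;> simp only [Fin.zero_eta, Fin.mk_one, Fin.reduceFinMk, Matrix.cons_val] <;>
        positivity
  convert hsum using 1
  · congr 1
    ext u
    simp only [Fin.sum_univ_three, Matrix.cons_val, add_sub_cancel_right, mul_add, add_mul,
      neg_add, neg_mul, one_mul, exp_add]
    ring
  · have : 1 + θl ≠ 0 := by positivity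
    have : 1 + θh ≠ 0 := by positivity
    simp only [Fin.sum_univ_three, Fin.sum_univ_four, Matrix.cons_val, add_mul, neg_add, exp_add]
    field_simp
    ring

theorem integral_five_general (p q r θh θl : ℝ)
    (hθh : 0 ≤ θh) (hθl : 0 ≤ θl) :
    (∫ s in Set.Ioi (0:ℝ), ∫ t in Set.Ioi s,
        Real.exp (-3 * s) * Real.exp (-(t - s)) *
          (2 * (1 - Real.exp (-θl * s)) * (r + Real.exp (-θl * t) * (q - r))
            - (1 - Real.exp (-θl * s)) ^ 2 * r
            - 2 * (1 - Real.exp (-θh * s)) * (r + Real.exp (-θh * t) * (p - r))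
            + (1 - Real.exp (-θh * s)) ^ 2 * r))
      = 2 * θl * (q - r) / ((1 + θl) * (3 + θl) * (3 + 2 * θl))
        - 2 * θh * (p - r) / ((1 + θh) * (3 + θh) * (3 + 2 * θh))
        + r / (3 + 2 * θh) - r / (3 + 2 * θl) := by
  simp_rw [integral_Ioi_inner_eq_sum_exp hθh hθl]
  rw [integral_sum_mul_exp_neg_mul_Ioi_zero _ _ _ fun i _ => by
    fin_cases i <;> simp only [Fin.zero_eta, Fin.mk_one, Fin.reduceFinMk, Matrix.cons_val] <;>
      positivity]
  have : 1 + θl ≠ 0 := by positivity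
  have : 1 + θh ≠ 0 := by positivity
  have : 3 + θl ≠ 0 := by positivity
  have : 3 + θh ≠ 0 := by positivity
  simp only [Fin.sum_univ_four, Matrix.cons_val]
  field_simp
  ring

/-- fifth (double) integral in the proof of Theorem 3. -/
theorem integral_five (p q r θh θl : ℝ)
    (hp : p ∈ Set.Icc (0:ℝ) 1) (hq : q ∈ Set.Icc (0:ℝ) 1) (hr : r ∈ Set.Icc (0:ℝ) 1)
    (hθh : 0 ≤ θh) (hθl : 0 ≤ θl) :
    (∫ s in Set.Ioi (0:ℝ), ∫ t in Set.Ioi s,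
        Real.exp (-3 * s) * Real.exp (-(t - s)) *
          (2 * (1 - Real.exp (-θl * s)) * (r + Real.exp (-θl * t) * (q - r))
            - (1 - Real.exp (-θl * s)) ^ 2 * r
            - 2 * (1 - Real.exp (-θh * s)) * (r + Real.exp (-θh * t) * (p - r))
            + (1 - Real.exp (-θh * s)) ^ 2 * r))
      = 2 * θl * (q - r) / ((1 + θl) * (3 + θl) * (3 + 2 * θl))
        - 2 * θh * (p - r) / ((1 + θh) * (3 + θh) * (3 + 2 * θh))
        + r / (3 + 2 * θh) - r / (3 + 2 * θl) :=
  integral_five_general p q r θh θl hθh hθl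
end

section
/- If p = q = r in the fixation-probability formula of Theorem 3, then F(x,r,r,r,θ_ℓ,θ_h) = 4x(1−x) r(1−r)(θ_h − θ_ℓ)/((3+2θ_ℓ)(3+2θ_h)); in particular F > 0 if and only if θ_h > θ_ℓ, provided x ∈ (0,1) and r ∈ (0,1). -/
/-- The fixation-probability functional of Theorem 3. -/
noncomputable def fixF (x p q r θl θh : ℝ) : ℝ :=
  x * (1 - x) *
    ((2 * r - 1) * (q - r) * (1 + 2 * θl) / ((1 + θl) * (3 + 2 * θl))
      - (2 * r - 1) * (p - r) * (1 + 2 * θh) / ((1 + θh) * (3 + 2 * θh))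
      + 2 * ((1 - x) * (q - r) ^ 2 / (3 + 2 * θl)
          - x * (p - r) ^ 2 / (3 + 2 * θh)
          + (2 * x - 1) * (p - r) * (q - r) / (3 + θl + θh)
          + r * (1 - r) * (1 / (3 + 2 * θl) - 1 / (3 + 2 * θh))))

/- At `p = q = r` every term carrying a factor `p - r` or `q - r` vanishes, whatever its
denominator, leaving only the mutational term `r (1 - r) (1/(3 + 2θℓ) - 1/(3 + 2θh))`. -/

theorem fixF_diag (x r θl θh : ℝ) :
    fixF x r r r θl θh
      = 2 * x * (1 - x) * r * (1 - r) * ((3 + 2 * θl)⁻¹ - (3 + 2 * θh)⁻¹) := by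
  simp only [fixF, sub_self, mul_zero, zero_mul, zero_div, ne_eq, OfNat.ofNat_ne_zero,
    not_false_eq_true, zero_pow, one_div]
  ring

theorem fixF_diag_eq_div (x r : ℝ) {θl θh : ℝ} (hθl : 0 ≤ θl) (hθh : 0 ≤ θh) :
    fixF x r r r θl θh
      = 4 * x * (1 - x) * r * (1 - r) * (θh - θl) / ((3 + 2 * θl) * (3 + 2 * θh)) := by
  have hl : (3 + 2 * θl : ℝ) ≠ 0 := by positivity
  have hh : (3 + 2 * θh : ℝ) ≠ 0 := by positivity
  rw [fixF_diag, inv_sub_inv hl hh]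
  ring

theorem fixF_mutational_balance_general (x r θl θh : ℝ)
    (hθl : 0 ≤ θl) (hθh : 0 ≤ θh) :
    fixF x r r r θl θh
        = 4 * x * (1 - x) * r * (1 - r) * (θh - θl) / ((3 + 2 * θl) * (3 + 2 * θh))
    ∧ (x ∈ Set.Ioo (0:ℝ) 1 → r ∈ Set.Ioo (0:ℝ) 1 →
        (0 < fixF x r r r θl θh ↔ θl < θh)) := by
  refine ⟨fixF_diag_eq_div x r hθl hθh, fun ⟨hx0, hx1⟩ ⟨hr0, hr1⟩ => ?_⟩
  have hden : 0 < (3 + 2 * θl) * (3 + 2 * θh) := by positivity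
  have hcoef : 0 < 4 * x * (1 - x) * r * (1 - r) := by
    have := sub_pos.2 hx1
    have := sub_pos.2 hr1
    positivity
  rw [fixF_diag_eq_div x r hθl hθh, div_pos_iff_of_pos_right hden,
    mul_pos_iff_of_pos_left hcoef, sub_pos]

/-- the case `p = q = r` of the fixation-probability formula. -/
theorem fixF_mutational_balance (x r θl θh : ℝ)
    (hx : x ∈ Set.Icc (0:ℝ) 1) (hr : r ∈ Set.Icc (0:ℝ) 1)
    (hθl : 0 ≤ θl) (hθh : 0 ≤ θh) :
    fixF x r r r θl θh
        = 4 * x * (1 - x) * r * (1 - r) * (θh - θl) / ((3 + 2 * θl) * (3 + 2 * θh))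
    ∧ (x ∈ Set.Ioo (0:ℝ) 1 → r ∈ Set.Ioo (0:ℝ) 1 →
        (0 < fixF x r r r θl θh ↔ θl < θh)) :=
  fixF_mutational_balance_general x r θl θh hθl hθh
end
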